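/- For a > 0 and ε ≥ 0, the derivative with respect to ε of g(ε) = Φ(a/2 − ε/a) − e^ε·Φ(−a/2 − ε/a) equals −e^ε·Φ(−a/2 − ε/a); in particular g is differentiable and g'(ε) < 0 for all ε ≥ 0. -/

import Mathlib

/-!
By the chain rule and the fundamental theorem of calculus, the derivative is
`-φ(a/2 - ε/a)/a - e^ε Φ(-a/2 - ε/a) + e^ε φ(-a/2 - ε/a)/a`, and the two density terms cancel
because `φ(a/2 - ε/a) = e^ε φ(-a/2 - ε/a)`. What remains is negative since `Φ > 0`.
-/

open MeasureTheory Real Set Filter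

/-- The standard normal CDF. -/
noncomputable def stdΦ (x : ℝ) : ℝ :=
  (Real.sqrt (2 * Real.pi))⁻¹ * ∫ t in Set.Iic x, Real.exp (-t ^ 2 / 2)

noncomputable def stdφ (x : ℝ) : ℝ :=
  (Real.sqrt (2 * Real.pi))⁻¹ * Real.exp (-x ^ 2 / 2)

lemma integrable_exp_neg_sq_div_two : Integrable (fun t : ℝ => Real.exp (-t ^ 2 / 2)) := by
  convert integrable_exp_neg_mul_sq (by norm_num : (0 : ℝ) < 1 / 2) using 2 with t
  ring_nf

lemma hasDerivAt_stdΦ (x : ℝ) : HasDerivAt stdΦ (stdφ x) x := by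
  have hint := integrable_exp_neg_sq_div_two
  have hsplit : stdΦ = fun y => (Real.sqrt (2 * Real.pi))⁻¹ *
      ((∫ t in Iic 0, Real.exp (-t ^ 2 / 2)) + ∫ t in (0 : ℝ)..y, Real.exp (-t ^ 2 / 2)) := by
    funext y
    rw [stdΦ, ← intervalIntegral.integral_Iic_sub_Iic hint.integrableOn hint.integrableOn]
    ring
  have hFTC : HasDerivAt (fun y => ∫ t in (0 : ℝ)..y, Real.exp (-t ^ 2 / 2))
      (Real.exp (-x ^ 2 / 2)) x :=
    intervalIntegral.integral_hasDerivAt_right hint.intervalIntegrable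
      hint.aestronglyMeasurable.stronglyMeasurableAtFilter (by fun_prop)
  rw [hsplit]
  simpa [stdφ] using ((hasDerivAt_const x _).add hFTC).const_mul (Real.sqrt (2 * Real.pi))⁻¹

lemma hasDerivAt_stdΦ_sub_div (c a ε : ℝ) :
    HasDerivAt (fun ε => stdΦ (c - ε / a)) (-(stdφ (c - ε / a) / a)) ε := by
  have hinner : HasDerivAt (fun ε : ℝ => c - ε / a) (-(1 / a)) ε :=
    ((hasDerivAt_id ε).div_const a).const_sub c
  refine ((hasDerivAt_stdΦ (c - ε / a)).comp ε hinner).congr_deriv ?_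
  ring

lemma stdΦ_pos (x : ℝ) : 0 < stdΦ x := by
  refine mul_pos (by positivity) ?_
  rw [setIntegral_pos_iff_support_of_nonneg_ae (ae_of_all _ fun t => (exp_pos _).le)
    integrable_exp_neg_sq_div_two.integrableOn]
  have hsupp : Function.support (fun t : ℝ => Real.exp (-t ^ 2 / 2)) = univ :=
    Function.support_eq_univ fun t => (exp_pos _).ne'
  simp [hsupp]

lemma stdφ_half_sub_div_eq_exp_mul {a : ℝ} (ha : a ≠ 0) (ε : ℝ) :
    stdφ (a / 2 - ε / a) = Real.exp ε * stdφ (-(a / 2) - ε / a) := by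
  -- `(a/2 - ε/a)² = (a/2 + ε/a)² - 2ε`
  rw [stdφ, stdφ, mul_left_comm, ← Real.exp_add]
  congr 2
  field_simp
  ring

theorem stmt11_general (a : ℝ) (ha : 0 < a) (ε : ℝ) :
    HasDerivAt (fun ε : ℝ => stdΦ (a / 2 - ε / a) - Real.exp ε * stdΦ (-(a / 2) - ε / a))
      (-(Real.exp ε * stdΦ (-(a / 2) - ε / a))) ε ∧
    -(Real.exp ε * stdΦ (-(a / 2) - ε / a)) < 0 := by
  refine ⟨?_, neg_neg_of_pos (mul_pos (exp_pos ε) (stdΦ_pos _))⟩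
  have hderiv := (hasDerivAt_stdΦ_sub_div (a / 2) a ε).sub
    ((Real.hasDerivAt_exp ε).mul (hasDerivAt_stdΦ_sub_div (-(a / 2)) a ε))
  refine hderiv.congr_deriv ?_
  rw [stdφ_half_sub_div_eq_exp_mul ha.ne']
  ring

theorem stmt11 (a : ℝ) (ha : 0 < a) (ε : ℝ) (hε : 0 ≤ ε) :
    HasDerivAt (fun ε : ℝ => stdΦ (a / 2 - ε / a) - Real.exp ε * stdΦ (-(a / 2) - ε / a))
      (-(Real.exp ε * stdΦ (-(a / 2) - ε / a))) ε ∧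
    -(Real.exp ε * stdΦ (-(a / 2) - ε / a)) < 0 :=
  stmt11_general a ha ε
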